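/- arXiv:0707.2327 — 2 statements merged into one kernel-verified Lean document; each statement's English description precedes it below -/
import Mathlib

section
/- In the setting above, suppose additionally that ν_δ(x_{p+1}), …, ν_δ(x_n) are ℚ-linearly independent in Γ_δ (where ν_δ(x_j)=0 for j ≤ p and ν_δ(x_j)>0 for j > p). Then ν_{δ*}(y_{p+1}), …, ν_{δ*}(y_n) are ℚ-linearly independent in Γ_{δ*}, and for every (m_{p+1},…,m_n) ∈ ℤ^{n−p}: Σ m_j ν_δ(x_j) > 0 if and only if Σ m_j ν_{δ*}(y_j) > 0. Consequently the subgroup of Γ_{δ*} generated by the ν_{δ*}(y_j) (j > p) is isomorphic, as an ordered group with marked generators, to the subgroup of Γ_δ generated by the ν_δ(x_j) (j > p). -/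
/-- An ordered subfield `R` of a linearly ordered field is real closed if every nonnegative
element has a square root in `R` and every polynomial over `R` of odd degree has a root. -/
def IsRealClosedSubfield {F : Type*} [Field F] [LinearOrder F] [IsStrictOrderedRing F] (R : Subfield F) : Prop :=
  (∀ x : F, x ∈ R → 0 ≤ x → ∃ y ∈ R, y ^ 2 = x) ∧
    ∀ p : Polynomial R, Odd p.natDegree → ∃ z : R, Polynomial.eval z p = 0

/-- The convex hull of a subring `B` in a linearly ordered field `F`: the valuation ring
of all elements bounded in absolute value by an element of `B`. -/
def convexHullSubring {F : Type*} [Field F] [LinearOrder F] [IsStrictOrderedRing F] (B : Subring F) : Subring F where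
  carrier := {x : F | ∃ z ∈ B, |x| ≤ z}
  zero_mem' := ⟨0, B.zero_mem, by simp⟩
  one_mem' := ⟨1, B.one_mem, by simp⟩
  add_mem' := by
    rintro a b ⟨z₁, hz₁, h₁⟩ ⟨z₂, hz₂, h₂⟩
    exact ⟨z₁ + z₂, B.add_mem hz₁ hz₂, (abs_add_le a b).trans (add_le_add h₁ h₂)⟩
  neg_mem' := by
    rintro a ⟨z, hz, h⟩
    exact ⟨z, hz, by simpa using h⟩
  mul_mem' := by
    rintro a b ⟨z₁, hz₁, h₁⟩ ⟨z₂, hz₂, h₂⟩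
    refine ⟨z₁ * z₂, B.mul_mem hz₁ hz₂, ?_⟩
    rw [abs_mul]
    exact mul_le_mul h₁ h₂ (abs_nonneg b) ((abs_nonneg a).trans h₁)

/-- The subring `A[δ] = R[x₁(δ),…,x_n(δ)]` of the ordered field `F = A(δ)`: the subring
generated by the subfield `R` together with the coordinates `x j`. -/
def pointRing {F : Type*} [Field F] [LinearOrder F] [IsStrictOrderedRing F] (R : Subfield F) {n : ℕ}
    (x : Fin n → F) : Subring F :=
  Subring.closure ((R : Set F) ∪ Set.range x)

/-- `y` is infinitesimal over `R`: `|y| < ε` for every positive `ε ∈ R`. -/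
def IsInfinitesimalOver {F : Type*} [Field F] [LinearOrder F] [IsStrictOrderedRing F] (R : Subfield F) (y : F) : Prop :=
  ∀ ε ∈ R, 0 < ε → |y| < ε

/-- `|y|` lies between two positive constants of `R`. -/
def IsBoundedUnitOver {F : Type*} [Field F] [LinearOrder F] [IsStrictOrderedRing F] (R : Subfield F) (y : F) : Prop :=
  ∃ c₁ ∈ R, ∃ c₂ ∈ R, 0 < c₁ ∧ c₁ < |y| ∧ |y| < c₂

/-- `y` is infinitely large over `R`: `|y| > N` for every `N ∈ R`. -/
def IsInfiniteOver {F : Type*} [Field F] [LinearOrder F] [IsStrictOrderedRing F] (R : Subfield F) (y : F) : Prop :=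
  ∀ N ∈ R, N < |y|

/-- The group of units of a subring `V` of a field `F`, as a subgroup of `Fˣ`. -/
def unitSubgroup {F : Type*} [Field F] [LinearOrder F] [IsStrictOrderedRing F] (V : Subring F) : Subgroup Fˣ where
  carrier := {u : Fˣ | (u : F) ∈ V ∧ ((u⁻¹ : Fˣ) : F) ∈ V}
  one_mem' := by simp [V.one_mem]
  mul_mem' := by
    rintro a b ⟨ha1, ha2⟩ ⟨hb1, hb2⟩
    refine ⟨by simpa using V.mul_mem ha1 hb1, ?_⟩
    have : ((b⁻¹ : Fˣ) : F) * ((a⁻¹ : Fˣ) : F) ∈ V := V.mul_mem hb2 ha2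
    simpa [mul_comm] using this
  inv_mem' := by
    rintro a ⟨h1, h2⟩
    exact ⟨h2, by simpa using h1⟩

/-- The order on the value group `Fˣ/Vˣ` attached to the valuation ring `V`:
the class of `u` is `≤` the class of `w` iff `w/u ∈ V`. -/
def valueGroupLE {F : Type*} [Field F] [LinearOrder F] [IsStrictOrderedRing F] (V : Subring F)
    (a b : Fˣ ⧸ unitSubgroup V) : Prop :=
  ∃ u w : Fˣ, a = QuotientGroup.mk u ∧ b = QuotientGroup.mk w ∧ ((w * u⁻¹ : Fˣ) : F) ∈ V

/-! `V* ⊆ Vδ`, and an element outside `V*` has absolute value `> 1`, so its inverse lies in `Vδ`.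
Hence `ν_δ` and `ν_{δ*}` can only disagree in sign on units of `Vδ`. The independence
hypothesis says that no nontrivial monomial `∏_{j > p} x_j^{m_j}` is such a unit, so on the group
of these monomials membership in `V*` and in `Vδ` coincide: the natural map `Γ_{δ*} → Γ_δ` is
injective and order-reflecting there. Finally `y_j = x_j` for `j > p`, since `ν_δ(x_j) > 0`
rules out `x_j` being infinite or a bounded unit over `R`. -/

open QuotientGroup

section ZpowProd

variable {G₀ ι : Type*} [CommGroupWithZero G₀] [Fintype ι]

lemma exists_val_eq_prod_zpow_of_mem_closure {x : ι → G₀} {s : Set ι} (hx : ∀ i ∈ s, x i ≠ 0)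
    {u : G₀ˣ} (hu : u ∈ Subgroup.closure {u : G₀ˣ | ∃ i ∈ s, (u : G₀) = x i}) :
    ∃ m : ι → ℤ, (∀ i ∉ s, m i = 0) ∧ (u : G₀) = ∏ i, x i ^ m i := by
  classical
  induction hu using Subgroup.closure_induction with
  | mem v hv =>
    obtain ⟨i, hi, hvi⟩ := hv
    refine ⟨Pi.single i 1, fun k hk => Pi.single_eq_of_ne (by rintro rfl; exact hk hi) _, ?_⟩
    rw [hvi, Finset.prod_eq_single i (fun k _ hk => by simp [hk]) (by simp)]
    simp
  | one => exact ⟨0, fun _ _ => rfl, by simp⟩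
  | mul v w _ _ hv hw =>
    obtain ⟨m₁, hm₁, hv⟩ := hv
    obtain ⟨m₂, hm₂, hw⟩ := hw
    refine ⟨m₁ + m₂, fun i hi => by simp [hm₁ i hi, hm₂ i hi], ?_⟩
    rw [Units.val_mul, hv, hw, ← Finset.prod_mul_distrib]
    refine Finset.prod_congr rfl fun i _ => (zpow_add' ?_).symm
    by_cases hi : i ∈ s
    · exact .inl (hx i hi)
    · exact .inr (.inr ⟨hm₁ i hi, hm₂ i hi⟩)
  | inv v _ hv =>
    obtain ⟨m, hm, hv⟩ := hv
    refine ⟨-m, fun i hi => by simp [hm i hi], ?_⟩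
    simp [hv, Finset.prod_inv_distrib, zpow_neg]

end ZpowProd

lemma closure_mk_eq_map_closure {M ι : Type*} [CommMonoid M] (N : Subgroup Mˣ) {x y : ι → M}
    {s : Set ι} (hxy : Set.EqOn y x s) :
    Subgroup.closure {g : Mˣ ⧸ N | ∃ i ∈ s, ∃ u : Mˣ, (u : M) = y i ∧ g = mk u} =
      (Subgroup.closure {u : Mˣ | ∃ i ∈ s, (u : M) = x i}).map (mk' N) := by
  rw [MonoidHom.map_closure]
  congr 1
  ext g
  constructor
  · rintro ⟨i, hi, u, hu, rfl⟩
    exact ⟨u, ⟨i, hi, hu.trans (hxy hi)⟩, rfl⟩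
  · rintro ⟨u, ⟨i, hi, hu⟩, rfl⟩
    exact ⟨i, hi, u, hu.trans (hxy hi).symm, rfl⟩

lemma Subring.mem_iff_mem_of_inv_mem {K : Type*} [DivisionRing K] {V W : Subring K} (hVW : V ≤ W)
    (hWV : ∀ z : K, z⁻¹ ∉ W → z ∈ V) {z : K} (hz : z ∈ W → z⁻¹ ∈ W → z = 1) :
    z ∈ V ↔ z ∈ W := by
  refine ⟨fun h => hVW h, fun h => ?_⟩
  by_cases hinv : z⁻¹ ∈ W
  · rw [hz h hinv]; exact V.one_mem
  · exact hWV z hinv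

lemma Subring.mem_and_inv_notMem_iff {K : Type*} [DivisionRing K] {V W : Subring K}
    (hVW : V ≤ W) (hWV : ∀ z : K, z⁻¹ ∉ W → z ∈ V) {z : K} (hz : z ∈ W → z⁻¹ ∈ W → z = 1) :
    z ∈ V ∧ z⁻¹ ∉ V ↔ z ∈ W ∧ z⁻¹ ∉ W := by
  have hz' : z⁻¹ ∈ W → z⁻¹⁻¹ ∈ W → z⁻¹ = 1 := fun h h' => by
    rw [inv_inv] at h'; rw [hz h' h, inv_one]
  rw [mem_iff_mem_of_inv_mem hVW hWV hz, mem_iff_mem_of_inv_mem hVW hWV hz']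

section ConvexHull

variable {F : Type*} [Field F] [LinearOrder F] [IsStrictOrderedRing F]

lemma convexHullSubring_mono {B C : Subring F} (h : B ≤ C) :
    convexHullSubring B ≤ convexHullSubring C :=
  fun _ ⟨z, hz, ha⟩ => ⟨z, h hz, ha⟩

lemma mem_convexHullSubring_of_inv_notMem {B : Subring F} (C : Subring F) {z : F}
    (h : z⁻¹ ∉ convexHullSubring B) : z ∈ convexHullSubring C := by
  have h1 : 1 < |z⁻¹| := lt_of_not_ge fun hle => h ⟨1, B.one_mem, hle⟩
  rw [abs_inv] at h1
  exact ⟨1, C.one_mem, (one_lt_inv_iff₀.mp h1).2.le⟩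

lemma inv_mem_convexHullSubring {R : Subfield F} {y : F}
    (hy : IsInfiniteOver R y ∨ IsBoundedUnitOver R y) : y⁻¹ ∈ convexHullSubring R.toSubring := by
  rcases hy with hy | ⟨c, hc, -, -, hc_pos, hc_lt, -⟩
  · exact ⟨1, R.one_mem, by rw [abs_inv]; exact inv_le_one_of_one_le₀ (hy 1 R.one_mem).le⟩
  · exact ⟨c⁻¹, R.inv_mem hc, by rw [abs_inv]; exact inv_anti₀ hc_pos hc_lt.le⟩

lemma toSubring_le_pointRing (R : Subfield F) {n : ℕ} (x : Fin n → F) :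
    R.toSubring ≤ pointRing R x :=
  fun _ ha => Subring.subset_closure (Set.mem_union_left _ ha)

end ConvexHull

section ValueGroup

variable {F : Type*} [Field F] [LinearOrder F] [IsStrictOrderedRing F] {V W : Subring F}

lemma mem_unitSubgroup {u : Fˣ} : u ∈ unitSubgroup V ↔ (u : F) ∈ V ∧ (u : F)⁻¹ ∈ V := by
  rw [← Units.val_inv_eq_inv_val]; rfl

lemma unitSubgroup_mono (h : V ≤ W) : unitSubgroup V ≤ unitSubgroup W :=
  fun _ hu => ⟨h hu.1, h hu.2⟩

lemma valueGroupLE_mk_mk_iff (u w : Fˣ) :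
    valueGroupLE V (mk u) (mk w) ↔ ((w * u⁻¹ : Fˣ) : F) ∈ V := by
  refine ⟨fun ⟨u', w', hu, hw, h⟩ => ?_, fun h => ⟨u, w, rfl, rfl, h⟩⟩
  have hu' := (QuotientGroup.eq.mp hu).1
  have hw' := (QuotientGroup.eq.mp hw.symm).1
  have : w * u⁻¹ = w' * u'⁻¹ * (w'⁻¹ * w) * (u⁻¹ * u') := by
    simp only [mul_inv_cancel_comm, mul_comm, mul_left_comm]
  rw [this, Units.val_mul, Units.val_mul]
  exact V.mul_mem (V.mul_mem h hw') hu'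

lemma val_mem_iff_of_disjoint (hVW : V ≤ W) (hWV : ∀ z : F, z⁻¹ ∉ W → z ∈ V) {H : Subgroup Fˣ}
    (hH : Disjoint H (unitSubgroup W)) {u : Fˣ} (hu : u ∈ H) : (u : F) ∈ V ↔ (u : F) ∈ W :=
  Subring.mem_iff_mem_of_inv_mem hVW hWV fun h h' => by
    rw [Subgroup.disjoint_def.mp hH hu (mem_unitSubgroup.mpr ⟨h, h'⟩), Units.val_one]

lemma disjoint_closure_unitSubgroup {ι : Type*} [Fintype ι] {x : ι → F} {s : Set ι}
    (hx : ∀ i ∈ s, x i ≠ 0)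
    (hW : ∀ m : ι → ℤ, (∀ i ∉ s, m i = 0) →
      ∏ i, x i ^ m i ∈ W → (∏ i, x i ^ m i)⁻¹ ∈ W → ∏ i, x i ^ m i = 1) :
    Disjoint (Subgroup.closure {u : Fˣ | ∃ i ∈ s, (u : F) = x i}) (unitSubgroup W) := by
  refine Subgroup.disjoint_def.mpr fun hu hWu => ?_
  obtain ⟨m, hm, hval⟩ := exists_val_eq_prod_zpow_of_mem_closure hx hu
  rw [mem_unitSubgroup, hval] at hWu
  exact Units.ext (hval.trans (hW m hm hWu.1 hWu.2))

noncomputable def valueSubgroupEquiv (hVW : V ≤ W) {H : Subgroup Fˣ}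
    (hH : Disjoint H (unitSubgroup W)) :
    H.map (mk' (unitSubgroup V)) ≃* H.map (mk' (unitSubgroup W)) :=
  let φ := QuotientGroup.map _ _ (MonoidHom.id Fˣ) (unitSubgroup_mono hVW)
  have hinj : Function.Injective (φ.subgroupMap (H.map (mk' (unitSubgroup V)))) := by
    refine (injective_iff_map_eq_one _).mpr ?_
    rintro ⟨_, u, hu, rfl⟩ h
    have hW : u ∈ unitSubgroup W := (QuotientGroup.eq_one_iff u).mp (congrArg Subtype.val h)
    exact Subtype.ext <| (QuotientGroup.eq_one_iff u).mpr <| by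
      rw [Subgroup.disjoint_def.mp hH hu hW]; exact one_mem _
  have hrange : (H.map (mk' (unitSubgroup V))).map φ = H.map (mk' (unitSubgroup W)) := by
    rw [Subgroup.map_map]; rfl
  (MulEquiv.ofBijective _ ⟨hinj, φ.subgroupMap_surjective _⟩).trans
    (MulEquiv.subgroupCongr hrange)

lemma valueSubgroupEquiv_mk (hVW : V ≤ W) {H : Subgroup Fˣ} (hH : Disjoint H (unitSubgroup W))
    {u : Fˣ} (hu : mk u ∈ H.map (mk' (unitSubgroup V)))
    (hu' : mk u ∈ H.map (mk' (unitSubgroup W))) :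
    valueSubgroupEquiv hVW hH ⟨mk u, hu⟩ = ⟨mk u, hu'⟩ :=
  rfl

lemma valueGroupLE_valueSubgroupEquiv_iff (hVW : V ≤ W) (hWV : ∀ z : F, z⁻¹ ∉ W → z ∈ V)
    {H : Subgroup Fˣ} (hH : Disjoint H (unitSubgroup W))
    (a b : H.map (mk' (unitSubgroup V))) :
    valueGroupLE W (valueSubgroupEquiv hVW hH a : Fˣ ⧸ unitSubgroup W)
      (valueSubgroupEquiv hVW hH b) ↔ valueGroupLE V (a : Fˣ ⧸ unitSubgroup V) b := by
  obtain ⟨_, u, hu, rfl⟩ := a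
  obtain ⟨_, w, hw, rfl⟩ := b
  exact (valueGroupLE_mk_mk_iff u w).trans <| (val_mem_iff_of_disjoint hVW hWV hH
    (H.mul_mem hw (H.inv_mem hu))).symm.trans (valueGroupLE_mk_mk_iff u w).symm

end ValueGroup

theorem induced_valuation_ogm_equiv_general {F : Type*} [Field F] [LinearOrder F] [IsStrictOrderedRing F]
    (R : Subfield F) {n : ℕ} (x : Fin n → F) (p : ℕ)
    (T : Finset (Fin n))
    (hT2 : ∀ j ∈ T, IsInfiniteOver R (x j) ∨ IsBoundedUnitOver R (x j))
    (y : Fin n → F) (hy : y = fun j => if j ∈ T then (x j)⁻¹ else x j)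
    (Vδ : Subring F) (hVδ : Vδ = convexHullSubring (pointRing R x))
    (Vstar : Subring F) (hVstar : Vstar = convexHullSubring R.toSubring)
    -- `ν_δ(x j) > 0` for `j > p`, with `x j ≠ 0` (so that `ν_δ(x j) ∈ Γ_δ`)
    (hpos : ∀ j : Fin n, p ≤ (j : ℕ) → x j ≠ 0 ∧ (x j)⁻¹ ∉ Vδ)
    -- `ν_δ(x_{p+1}), …, ν_δ(x_n)` are `ℚ`-linearly independent:
    -- no nontrivial integer combination `Σ m_j ν_δ(x_j)` vanishes
    (hind : ∀ m : Fin n → ℤ, (∀ j : Fin n, (j : ℕ) < p → m j = 0) →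
      (∏ j, x j ^ m j) ∈ Vδ → (∏ j, x j ^ m j)⁻¹ ∈ Vδ → ∀ j, m j = 0)
    (G1 : Subgroup (Fˣ ⧸ unitSubgroup Vstar))
    (hG1 : G1 = Subgroup.closure
      {g | ∃ j : Fin n, p ≤ (j : ℕ) ∧ ∃ u : Fˣ, (u : F) = y j ∧ g = QuotientGroup.mk u})
    (G2 : Subgroup (Fˣ ⧸ unitSubgroup Vδ))
    (hG2 : G2 = Subgroup.closure
      {g | ∃ j : Fin n, p ≤ (j : ℕ) ∧ ∃ u : Fˣ, (u : F) = x j ∧ g = QuotientGroup.mk u}) :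
    -- the `ν_{δ*}(y_j)`, `j > p`, are `ℚ`-linearly independent
    (∀ m : Fin n → ℤ, (∀ j : Fin n, (j : ℕ) < p → m j = 0) →
      (∏ j, y j ^ m j) ∈ Vstar → (∏ j, y j ^ m j)⁻¹ ∈ Vstar → ∀ j, m j = 0) ∧
    -- `Σ m_j ν_δ(x_j) > 0 ↔ Σ m_j ν_{δ*}(y_j) > 0`
    (∀ m : Fin n → ℤ, (∀ j : Fin n, (j : ℕ) < p → m j = 0) →
      (((∏ j, x j ^ m j) ∈ Vδ ∧ (∏ j, x j ^ m j)⁻¹ ∉ Vδ) ↔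
        ((∏ j, y j ^ m j) ∈ Vstar ∧ (∏ j, y j ^ m j)⁻¹ ∉ Vstar))) ∧
    -- the marked subgroups of the value groups are isomorphic as ordered groups
    ∃ e : G1 ≃* G2,
      (∀ a b : G1, valueGroupLE Vstar (a : Fˣ ⧸ unitSubgroup Vstar) b ↔
        valueGroupLE Vδ (e a : Fˣ ⧸ unitSubgroup Vδ) (e b)) ∧
      ∀ (j : Fin n), p ≤ (j : ℕ) → ∀ (u w : Fˣ), (u : F) = y j → (w : F) = x j →
        ∀ (hu : QuotientGroup.mk u ∈ G1) (hw : QuotientGroup.mk w ∈ G2),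
          e ⟨QuotientGroup.mk u, hu⟩ = ⟨QuotientGroup.mk w, hw⟩ := by
  have hVW : Vstar ≤ Vδ := hVstar ▸ hVδ ▸ convexHullSubring_mono (toSubring_le_pointRing R x)
  have hWV (z : F) (hz : z⁻¹ ∉ Vδ) : z ∈ Vstar :=
    hVstar ▸ mem_convexHullSubring_of_inv_notMem _ (hVδ ▸ hz)
  set s : Set (Fin n) := {j | p ≤ (j : ℕ)}
  have hyx : Set.EqOn y x s := fun j hj => by
    have hjT : j ∉ T := fun hjT =>
      (hpos j hj).2 (hVW (hVstar ▸ inv_mem_convexHullSubring (hT2 j hjT)))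
    simp [hy, hjT]
  have hprod (m : Fin n → ℤ) (hm : ∀ j : Fin n, (j : ℕ) < p → m j = 0) :
      ∏ j, y j ^ m j = ∏ j, x j ^ m j :=
    Finset.prod_congr rfl fun j _ => by
      rcases lt_or_ge (j : ℕ) p with hj | hj
      · simp [hm j hj]
      · rw [hyx hj]
  have hrigid (m : Fin n → ℤ) (hm : ∀ j : Fin n, (j : ℕ) < p → m j = 0)
      (h : ∏ j, x j ^ m j ∈ Vδ) (h' : (∏ j, x j ^ m j)⁻¹ ∈ Vδ) : ∏ j, x j ^ m j = 1 :=
    Finset.prod_eq_one fun j _ => by rw [hind m hm h h' j, zpow_zero]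
  have hH : Disjoint (Subgroup.closure {u : Fˣ | ∃ j ∈ s, (u : F) = x j}) (unitSubgroup Vδ) :=
    disjoint_closure_unitSubgroup (fun j hj => (hpos j hj).1) fun m hm =>
      hrigid m fun j hj => hm j (not_le.mpr hj)
  obtain rfl := hG1.trans (closure_mk_eq_map_closure _ hyx)
  obtain rfl := hG2.trans (closure_mk_eq_map_closure _ (Set.eqOn_refl x s))
  refine ⟨fun m hm h h' => ?_, fun m hm => ?_, valueSubgroupEquiv hVW hH,
    fun a b => (valueGroupLE_valueSubgroupEquiv_iff hVW hWV hH a b).symm,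
    fun j hj u w hu hw _ _ => ?_⟩
  · rw [hprod m hm] at h h'
    exact hind m hm (hVW h) (hVW h')
  · rw [hprod m hm]
    exact (Subring.mem_and_inv_notMem_iff hVW hWV (hrigid m hm)).symm
  · obtain rfl : u = w := Units.ext (by rw [hu, hw, hyx hj])
    exact valueSubgroupEquiv_mk _ _ _ _

/-- Setting of the previous statements, assuming moreover that
`ν_δ(x_{p+1}), …, ν_δ(x_n)` are `ℚ`-linearly independent in `Γ_δ`.  Then
`ν_{δ*}(y_{p+1}), …, ν_{δ*}(y_n)` are `ℚ`-linearly independent in `Γ_{δ*}`; for every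
integer tuple `m`, `Σ m_j ν_δ(x_j) > 0` iff `Σ m_j ν_{δ*}(y_j) > 0`; and the subgroup of
`Γ_{δ*}` generated by the `ν_{δ*}(y_j)` (`j > p`) is isomorphic, as an ordered group with
marked generators, to the subgroup of `Γ_δ` generated by the `ν_δ(x_j)` (`j > p`).
(Here `ν(g) = 0` is expressed by `g, g⁻¹ ∈ V` and `ν(g) > 0` by `g ∈ V`, `g⁻¹ ∉ V`.) -/
theorem induced_valuation_ogm_equiv {F : Type*} [Field F] [LinearOrder F] [IsStrictOrderedRing F]
    (R : Subfield F) (hR : IsRealClosedSubfield R) {n : ℕ} (x : Fin n → F) (p : ℕ)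
    (T : Finset (Fin n))
    (hT1 : ∀ j : Fin n, IsInfiniteOver R (x j) → j ∈ T)
    (hT2 : ∀ j ∈ T, IsInfiniteOver R (x j) ∨ IsBoundedUnitOver R (x j))
    (y : Fin n → F) (hy : y = fun j => if j ∈ T then (x j)⁻¹ else x j)
    (Vδ : Subring F) (hVδ : Vδ = convexHullSubring (pointRing R x))
    (Vstar : Subring F) (hVstar : Vstar = convexHullSubring R.toSubring)
    -- `ν_δ(x j) = 0` for `j ≤ p`
    (h0 : ∀ j : Fin n, (j : ℕ) < p → x j ≠ 0 ∧ x j ∈ Vδ ∧ (x j)⁻¹ ∈ Vδ)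
    -- `ν_δ(x j) > 0` for `j > p`, with `x j ≠ 0` (so that `ν_δ(x j) ∈ Γ_δ`)
    (hpos : ∀ j : Fin n, p ≤ (j : ℕ) → x j ≠ 0 ∧ (x j)⁻¹ ∉ Vδ)
    -- `ν_δ(x_{p+1}), …, ν_δ(x_n)` are `ℚ`-linearly independent:
    -- no nontrivial integer combination `Σ m_j ν_δ(x_j)` vanishes
    (hind : ∀ m : Fin n → ℤ, (∀ j : Fin n, (j : ℕ) < p → m j = 0) →
      (∏ j, x j ^ m j) ∈ Vδ → (∏ j, x j ^ m j)⁻¹ ∈ Vδ → ∀ j, m j = 0)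
    (G1 : Subgroup (Fˣ ⧸ unitSubgroup Vstar))
    (hG1 : G1 = Subgroup.closure
      {g | ∃ j : Fin n, p ≤ (j : ℕ) ∧ ∃ u : Fˣ, (u : F) = y j ∧ g = QuotientGroup.mk u})
    (G2 : Subgroup (Fˣ ⧸ unitSubgroup Vδ))
    (hG2 : G2 = Subgroup.closure
      {g | ∃ j : Fin n, p ≤ (j : ℕ) ∧ ∃ u : Fˣ, (u : F) = x j ∧ g = QuotientGroup.mk u}) :
    -- the `ν_{δ*}(y_j)`, `j > p`, are `ℚ`-linearly independent
    (∀ m : Fin n → ℤ, (∀ j : Fin n, (j : ℕ) < p → m j = 0) →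
      (∏ j, y j ^ m j) ∈ Vstar → (∏ j, y j ^ m j)⁻¹ ∈ Vstar → ∀ j, m j = 0) ∧
    -- `Σ m_j ν_δ(x_j) > 0 ↔ Σ m_j ν_{δ*}(y_j) > 0`
    (∀ m : Fin n → ℤ, (∀ j : Fin n, (j : ℕ) < p → m j = 0) →
      (((∏ j, x j ^ m j) ∈ Vδ ∧ (∏ j, x j ^ m j)⁻¹ ∉ Vδ) ↔
        ((∏ j, y j ^ m j) ∈ Vstar ∧ (∏ j, y j ^ m j)⁻¹ ∉ Vstar))) ∧
    -- the marked subgroups of the value groups are isomorphic as ordered groups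
    ∃ e : G1 ≃* G2,
      (∀ a b : G1, valueGroupLE Vstar (a : Fˣ ⧸ unitSubgroup Vstar) b ↔
        valueGroupLE Vδ (e a : Fˣ ⧸ unitSubgroup Vδ) (e b)) ∧
      ∀ (j : Fin n), p ≤ (j : ℕ) → ∀ (u w : Fˣ), (u : F) = y j → (w : F) = x j →
        ∀ (hu : QuotientGroup.mk u ∈ G1) (hw : QuotientGroup.mk w ∈ G2),
          e ⟨QuotientGroup.mk u, hu⟩ = ⟨QuotientGroup.mk w, hw⟩ :=
  induced_valuation_ogm_equiv_general R x p T hT2 y hy Vδ hVδ Vstar hVstar hpos hind G1 hG1 G2 hG2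
end

section
/- Let R be a real closed field, A = R[x₁,…,x_n]. For each triple (I, F, G) of pairwise disjoint subsets of {1,…,n} with I = ∅ whenever G = ∅, define U_{I,F,G} ⊆ Sper A as the set of δ such that: ν_δ(x_j) = 0 exactly for j ∈ I ∪ F ∪ G and ν_δ(x_j) > 0 for j ∉ I ∪ F ∪ G; |x_j|_δ < ε for all positive ε ∈ R when j ∈ I; c₁ < |x_j|_δ < c₂ for some positive c₁, c₂ ∈ R when j ∈ F; and |x_j|_δ > N for all N ∈ R when j ∈ G. Then Sper A is the disjoint union of the sets U_{I,F,G} over all such triples. -/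
/-!
Each coordinate `x j` of `δ` is infinitesimal, bounded between two positive
constants, or infinitely large over `R`, and exactly one of these holds; sorting the unit
coordinates of the valuation ring accordingly gives the unique triple. For `I = ∅` whenever
`G = ∅`: if no coordinate is infinitely large, then `A[δ]`, and hence its convex hull, is
bounded by `R`, so no unit of the convex hull can be infinitesimal.
-/

theorem existsUnique_finset_triple_of_trichotomy {ι : Type*} [Fintype ι] [DecidableEq ι]
    {U P₁ P₂ P₃ : ι → Prop}
    (h₁₂ : ∀ j, P₁ j → ¬ P₂ j) (h₁₃ : ∀ j, P₁ j → ¬ P₃ j)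
    (h₂₃ : ∀ j, P₂ j → ¬ P₃ j)
    (hP : ∀ j, U j → P₁ j ∨ P₂ j ∨ P₃ j) :
    ∃! t : Finset ι × Finset ι × Finset ι, (∀ j, j ∈ t.1 ∪ t.2.1 ∪ t.2.2 ↔ U j) ∧
      (∀ j ∈ t.1, P₁ j) ∧ (∀ j ∈ t.2.1, P₂ j) ∧ (∀ j ∈ t.2.2, P₃ j) := by
  classical
  refine ⟨(Finset.univ.filter fun j => U j ∧ P₁ j, Finset.univ.filter fun j => U j ∧ P₂ j,
    Finset.univ.filter fun j => U j ∧ P₃ j), ?_, ?_⟩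
  · refine ⟨fun j => ?_, fun j hj => ?_, fun j hj => ?_, fun j hj => ?_⟩ <;>
      simp only [Finset.mem_union, Finset.mem_filter, Finset.mem_univ, true_and] at * <;>
      grind
  · rintro ⟨I, J, K⟩ ⟨hU, hI, hJ, hK⟩
    simp only [Prod.mk.injEq, Finset.ext_iff, Finset.mem_filter, Finset.mem_univ, true_and, ← hU,
      Finset.mem_union]
    grind

section OrderedField

variable {F : Type*} [Field F] [LinearOrder F] [IsStrictOrderedRing F] {R : Subfield F} {y : F}

theorem IsInfinitesimalOver.not_isBoundedUnitOver (h : IsInfinitesimalOver R y) :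
    ¬ IsBoundedUnitOver R y := by
  rintro ⟨c₁, hc₁, c₂, -, hc₁_pos, hc₁_lt, -⟩
  exact (h c₁ hc₁ hc₁_pos).not_gt hc₁_lt

theorem IsInfinitesimalOver.not_isInfiniteOver (h : IsInfinitesimalOver R y) :
    ¬ IsInfiniteOver R y :=
  fun h' => (h 1 R.one_mem one_pos).not_gt (h' 1 R.one_mem)

theorem IsBoundedUnitOver.not_isInfiniteOver (h : IsBoundedUnitOver R y) :
    ¬ IsInfiniteOver R y := by
  obtain ⟨c₁, -, c₂, hc₂, -, -, hlt⟩ := h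
  exact fun h' => (h' c₂ hc₂).not_gt hlt

theorem isInfinitesimalOver_or_isBoundedUnitOver_or_isInfiniteOver (R : Subfield F) (y : F) :
    IsInfinitesimalOver R y ∨ IsBoundedUnitOver R y ∨ IsInfiniteOver R y := by
  by_contra! h
  obtain ⟨hsmall, hbounded, hlarge⟩ := h
  simp only [IsInfinitesimalOver, IsInfiniteOver, not_forall, not_lt] at hsmall hlarge
  obtain ⟨ε, hε, hε_pos, hε_le⟩ := hsmall
  obtain ⟨N, hN, hN_ge⟩ := hlarge
  exact hbounded ⟨ε / 2, R.div_mem hε (ofNat_mem R 2), N + 1, R.add_mem hN R.one_mem,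
    by linarith, by linarith, by linarith⟩

theorem IsInfiniteOver.one_lt_abs (h : IsInfiniteOver R y) : 1 < |y| :=
  h 1 R.one_mem

theorem IsInfiniteOver.ne_zero (h : IsInfiniteOver R y) : y ≠ 0 :=
  abs_pos.1 (one_pos.trans h.one_lt_abs)

theorem le_convexHullSubring (B : Subring F) : B ≤ convexHullSubring B := fun y hy => by
  rcases abs_choice y with h | h
  · exact ⟨y, hy, h.le⟩
  · exact ⟨-y, B.neg_mem hy, h.le⟩

theorem convexHullSubring_le_convexHullSubring {B C : Subring F}
    (h : B ≤ convexHullSubring C) : convexHullSubring B ≤ convexHullSubring C := by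
  rintro y ⟨z, hz, hyz⟩
  obtain ⟨w, hw, hzw⟩ := h hz
  exact ⟨w, hw, hyz.trans ((le_abs_self z).trans hzw)⟩

theorem inv_mem_convexHullSubring_of_one_le_abs (B : Subring F) (h : 1 ≤ |y|) :
    y⁻¹ ∈ convexHullSubring B :=
  ⟨1, B.one_mem, by simpa only [abs_inv] using inv_le_one_of_one_le₀ h⟩

theorem IsInfinitesimalOver.inv_notMem_convexHullSubring (h : IsInfinitesimalOver R y)
    (hy : y ≠ 0) : y⁻¹ ∉ convexHullSubring R.toSubring := by
  rintro ⟨r, hr, hyr⟩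
  have hr_pos : 0 < r := (abs_pos.2 (inv_ne_zero hy)).trans_le hyr
  have hy_lt : |y| < r⁻¹ := h r⁻¹ (R.inv_mem hr) (inv_pos.2 hr_pos)
  rw [abs_inv] at hyr
  exact (lt_inv_comm₀ (abs_pos.2 hy) hr_pos |>.1 hy_lt).not_ge hyr

variable {n : ℕ} {x : Fin n → F}

theorem coord_mem_convexHullSubring_pointRing (j : Fin n) :
    x j ∈ convexHullSubring (pointRing R x) :=
  le_convexHullSubring _ (Subring.subset_closure (Or.inr ⟨j, rfl⟩))

theorem pointRing_le_convexHullSubring (hx : ∀ j, ¬ IsInfiniteOver R (x j)) :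
    pointRing R x ≤ convexHullSubring R.toSubring := by
  refine Subring.closure_le.2 ?_
  rintro y (hy | ⟨j, rfl⟩)
  · exact le_convexHullSubring R.toSubring hy
  · obtain ⟨N, hN, hxN⟩ : ∃ N ∈ R, |x j| ≤ N := by
      simpa only [IsInfiniteOver, not_forall, not_lt, exists_prop] using hx j
    exact ⟨N, hN, hxN⟩

theorem exists_isInfiniteOver_coord_of_isInfinitesimalOver (h : IsInfinitesimalOver R y)
    (hy : y ≠ 0) (hinv : y⁻¹ ∈ convexHullSubring (pointRing R x)) :
    ∃ k, IsInfiniteOver R (x k) := by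
  by_contra! hx
  exact h.inv_notMem_convexHullSubring hy
    (convexHullSubring_le_convexHullSubring (pointRing_le_convexHullSubring hx) hinv)

end OrderedField

theorem sper_partition_general {F : Type*} [Field F] [LinearOrder F] [IsStrictOrderedRing F]
    (R : Subfield F) {n : ℕ} (x : Fin n → F)
    (Vδ : Subring F) (hVδ : Vδ = convexHullSubring (pointRing R x)) :
    ∃! t : Finset (Fin n) × Finset (Fin n) × Finset (Fin n),
      Disjoint t.1 t.2.1 ∧ Disjoint t.1 t.2.2 ∧ Disjoint t.2.1 t.2.2 ∧
      (t.2.2 = ∅ → t.1 = ∅) ∧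
      (∀ j : Fin n, (j ∈ t.1 ∪ t.2.1 ∪ t.2.2) ↔
        (x j ≠ 0 ∧ x j ∈ Vδ ∧ (x j)⁻¹ ∈ Vδ)) ∧
      (∀ j : Fin n, j ∉ t.1 ∪ t.2.1 ∪ t.2.2 → x j = 0 ∨ (x j)⁻¹ ∉ Vδ) ∧
      (∀ j ∈ t.1, IsInfinitesimalOver R (x j)) ∧
      (∀ j ∈ t.2.1, IsBoundedUnitOver R (x j)) ∧
      (∀ j ∈ t.2.2, IsInfiniteOver R (x j)) := by
  subst hVδ
  obtain ⟨t, ⟨hU, hI, hF, hG⟩, huniq⟩ := existsUnique_finset_triple_of_trichotomy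
    (U := fun j => x j ≠ 0 ∧ x j ∈ convexHullSubring (pointRing R x) ∧
      (x j)⁻¹ ∈ convexHullSubring (pointRing R x))
    (P₁ := fun j => IsInfinitesimalOver R (x j)) (P₂ := fun j => IsBoundedUnitOver R (x j))
    (P₃ := fun j => IsInfiniteOver R (x j))
    (fun _ => IsInfinitesimalOver.not_isBoundedUnitOver)
    (fun _ => IsInfinitesimalOver.not_isInfiniteOver)
    (fun _ => IsBoundedUnitOver.not_isInfiniteOver)
    (fun j _ => isInfinitesimalOver_or_isBoundedUnitOver_or_isInfiniteOver R (x j))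
  have disjoint {s s' : Finset (Fin n)} {P Q : F → Prop} (hs : ∀ j ∈ s, P (x j))
      (hs' : ∀ j ∈ s', Q (x j)) (hPQ : ∀ y, P y → ¬ Q y) : Disjoint s s' :=
    Finset.disjoint_left.2 fun j hj hj' => hPQ _ (hs j hj) (hs' j hj')
  refine ⟨t, ⟨disjoint hI hF fun _ => IsInfinitesimalOver.not_isBoundedUnitOver,
    disjoint hI hG fun _ => IsInfinitesimalOver.not_isInfiniteOver,
    disjoint hF hG fun _ => IsBoundedUnitOver.not_isInfiniteOver, ?_, hU, ?_, hI, hF, hG⟩,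
    fun t' ⟨_, _, _, _, hU', _, hI', hF', hG'⟩ => huniq t' ⟨hU', hI', hF', hG'⟩⟩
  · intro hG_empty
    by_contra hI_ne
    obtain ⟨j, hj⟩ := Finset.nonempty_iff_ne_empty.2 hI_ne
    obtain ⟨hj_ne, -, hj_inv⟩ := (hU j).1 (Finset.mem_union_left _ (Finset.mem_union_left _ hj))
    obtain ⟨k, hk⟩ := exists_isInfiniteOver_coord_of_isInfinitesimalOver (hI j hj) hj_ne hj_inv
    have hk_mem := (hU k).2 ⟨hk.ne_zero, coord_mem_convexHullSubring_pointRing k,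
      inv_mem_convexHullSubring_of_one_le_abs _ hk.one_lt_abs.le⟩
    simp only [Finset.mem_union, hG_empty, Finset.notMem_empty, or_false] at hk_mem
    rcases hk_mem with hkI | hkF
    · exact IsInfinitesimalOver.not_isInfiniteOver (hI k hkI) hk
    · exact IsBoundedUnitOver.not_isInfiniteOver (hF k hkF) hk
  · intro j hj
    by_contra! h
    exact hj ((hU j).2 ⟨h.1, coord_mem_convexHullSubring_pointRing j, h.2⟩)

/-- Let `R` be a real closed field, `A = R[x₁,…,x_n]`, and `δ` a point of `Sper A`
(presented by its ordered residue field `F ⊇ R` and the coordinates `x j`), with valuation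
ring `R_δ` the convex hull of `A[δ]`.  Then `δ` belongs to exactly one of the sets
`U_{I,F,G}`: there is a unique triple `(I, F, G)` of pairwise disjoint subsets of
`{1,…,n}` with `I = ∅` whenever `G = ∅`, such that `ν_δ(x_j) = 0` exactly for
`j ∈ I ∪ F ∪ G` (and `ν_δ(x_j) > 0` otherwise), the coordinates indexed by `I` are
infinitesimal over `R`, those indexed by `F` lie between two positive constants of `R`,
and those indexed by `G` are infinitely large over `R`.  Hence
`Sper A = ∐_{I,F,G} U_{I,F,G}`. -/
theorem sper_partition {F : Type*} [Field F] [LinearOrder F] [IsStrictOrderedRing F]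
    (R : Subfield F) (hR : IsRealClosedSubfield R) {n : ℕ} (x : Fin n → F)
    (Vδ : Subring F) (hVδ : Vδ = convexHullSubring (pointRing R x)) :
    ∃! t : Finset (Fin n) × Finset (Fin n) × Finset (Fin n),
      Disjoint t.1 t.2.1 ∧ Disjoint t.1 t.2.2 ∧ Disjoint t.2.1 t.2.2 ∧
      (t.2.2 = ∅ → t.1 = ∅) ∧
      (∀ j : Fin n, (j ∈ t.1 ∪ t.2.1 ∪ t.2.2) ↔
        (x j ≠ 0 ∧ x j ∈ Vδ ∧ (x j)⁻¹ ∈ Vδ)) ∧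
      (∀ j : Fin n, j ∉ t.1 ∪ t.2.1 ∪ t.2.2 → x j = 0 ∨ (x j)⁻¹ ∉ Vδ) ∧
      (∀ j ∈ t.1, IsInfinitesimalOver R (x j)) ∧
      (∀ j ∈ t.2.1, IsBoundedUnitOver R (x j)) ∧
      (∀ j ∈ t.2.2, IsInfiniteOver R (x j)) :=
  sper_partition_general R x Vδ hVδ
end
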